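/- Let X be a simplicial set and x an n-simplex of X. If an ordinal i ∈ [n] reduces x but does not properly reduce x, then i−1 properly reduces x (in particular i ≥ 1). -/

import Mathlib

/-!
Write `x = y ε` with `ε : [n+1] → [k]` an epimorphism and `k` minimal, so that
`dgn x = n + 1 - k`. If `i` is alone in its fibre under `ε`, then `x δᵢ` is a degeneracy of
the `(k-1)`-simplex `y δ_{ε i}`, so `dgn (x δᵢ) ≥ dgn x` and `i` does not reduce `x`.
Otherwise, by monotonicity, `ε` identifies `i` with `i - 1` or with `i + 1`; it then factors
through `σ_{i-1}` or `σ_i`, and `x` is properly reduced by `i - 1` or by `i` respectively.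
-/

open CategoryTheory Simplicial

namespace AufhebungSSet

/-- An `n`-simplex `x` of a simplicial set `X` is degenerate if it is the image of a
simplex of strictly smaller dimension under the action of an epimorphism of `Δ`. -/
def IsDegen (X : SSet) {n : ℕ} (x : X _⦋n⦌) : Prop :=
  ∃ m : ℕ, m < n ∧ ∃ ε : (⦋n⦌ : SimplexCategory) ⟶ ⦋m⦌,
    Function.Surjective ε.toOrderHom ∧ ∃ y : X _⦋m⦌, x = X.map ε.op y

/-- The degeneracy `dgn x = n - k`, where `k` is the least dimension from which `x`
is the image of a simplex under the action of an epimorphism; by the Eilenberg–Zilber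
lemma this is the dimension of the nondegenerate simplex of which `x` is a degeneracy. -/
noncomputable def dgn (X : SSet) {n : ℕ} (x : X _⦋n⦌) : ℕ :=
  n - sInf {k | ∃ ε : (⦋n⦌ : SimplexCategory) ⟶ ⦋k⦌,
    Function.Surjective ε.toOrderHom ∧ ∃ y : X _⦋k⦌, x = X.map ε.op y}

/-- `i` reduces `x` when `dgn (x δᵢ) = dgn x - 1`. -/
def Reduces (X : SSet) {n : ℕ} (i : Fin (n + 2)) (x : X _⦋n + 1⦌) : Prop :=
  dgn X (X.map (SimplexCategory.δ i).op x) + 1 = dgn X x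

/-- `i` properly reduces `x` when `x = x δᵢ σᵢ`. -/
def ProperlyReduces (X : SSet) {n : ℕ} (i : Fin (n + 1)) (x : X _⦋n + 1⦌) : Prop :=
  x = X.map (SimplexCategory.σ i).op (X.map (SimplexCategory.δ i.castSucc).op x)

/-- A `(K+2)`-sphere: a family `c₀, …, c_{K+2}` of `(K+1)`-simplices satisfying the
cycle equations `cⱼ δᵢ = cᵢ δ_{j-1}` for `i < j` (here reindexed: `c_{j+1} δᵢ = cᵢ δⱼ`
for `i ≤ j`). -/
def IsSphere (X : SSet) {K : ℕ} (c : Fin (K + 3) → X _⦋K + 1⦌) : Prop :=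
  ∀ i j : Fin (K + 2), i ≤ j →
    X.map (SimplexCategory.δ i).op (c j.succ) = X.map (SimplexCategory.δ j).op (c i.castSucc)

/-- `y` fills the sphere `c` when `y δᵢ = cᵢ` for all `i`. -/
def IsFiller (X : SSet) {K : ℕ} (y : X _⦋K + 2⦌) (c : Fin (K + 3) → X _⦋K + 1⦌) : Prop :=
  ∀ i : Fin (K + 3), X.map (SimplexCategory.δ i).op y = c i


variable (X : SSet)

def epiDims {n : ℕ} (x : X _⦋n⦌) : Set ℕ :=
  {k | ∃ ε : (⦋n⦌ : SimplexCategory) ⟶ ⦋k⦌,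
    Function.Surjective ε.toOrderHom ∧ ∃ y : X _⦋k⦌, x = X.map ε.op y}

lemma dgn_eq {n : ℕ} (x : X _⦋n⦌) : dgn X x = n - sInf (epiDims X x) := rfl

lemma self_mem_epiDims {n : ℕ} (x : X _⦋n⦌) : n ∈ epiDims X x :=
  ⟨𝟙 _, Function.surjective_id, x, by simp⟩

lemma sInf_epiDims_mem {n : ℕ} (x : X _⦋n⦌) : sInf (epiDims X x) ∈ epiDims X x :=
  Nat.sInf_mem ⟨n, self_mem_epiDims X x⟩

variable {X}

lemma face_mem_epiDims {n k : ℕ} {x : X _⦋n + 1⦌} {i : Fin (n + 2)}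
    {ε : (⦋n + 1⦌ : SimplexCategory) ⟶ ⦋k + 1⦌} (hε : Function.Surjective ε.toOrderHom)
    (hfib : ∀ j, ε.toOrderHom j = ε.toOrderHom i → j = i) {y : X _⦋k + 1⦌}
    (hx : x = X.map ε.op y) :
    k ∈ epiDims X (X.map (SimplexCategory.δ i).op x) := by
  set p := ε.toOrderHom i
  obtain ⟨η, hη⟩ := SimplexCategory.eq_comp_δ_of_not_surjective' (SimplexCategory.δ i ≫ ε) p
    fun j h => Fin.succAbove_ne i j (hfib _ h)
  refine ⟨η, fun m => ?_, X.map (SimplexCategory.δ p).op y, ?_⟩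
  · obtain ⟨j', hj'⟩ := hε (p.succAbove m)
    have hj'i : j' ≠ i := by
      rintro rfl
      exact Fin.succAbove_ne p m hj'.symm
    obtain ⟨j, rfl⟩ := Fin.exists_succAbove_eq hj'i
    refine ⟨j, Fin.succAbove_right_injective (p := p) ?_⟩
    rw [← hj']
    exact (congrArg (fun f => f.toOrderHom j) hη).symm
  · rw [hx]
    simp only [← Functor.map_comp_apply, ← op_comp, hη]

lemma sInf_epiDims_face_lt {n k : ℕ} {x : X _⦋n + 1⦌} {i : Fin (n + 2)}
    {ε : (⦋n + 1⦌ : SimplexCategory) ⟶ ⦋k⦌} (hε : Function.Surjective ε.toOrderHom)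
    (hfib : ∀ j, ε.toOrderHom j = ε.toOrderHom i → j = i) {y : X _⦋k⦌}
    (hx : x = X.map ε.op y) :
    sInf (epiDims X (X.map (SimplexCategory.δ i).op x)) < k := by
  cases k with
  | zero =>
    have h0 := hfib 0 (Subsingleton.elim (α := Fin 1) _ _)
    have h1 := hfib 1 (Subsingleton.elim (α := Fin 1) _ _)
    exact absurd (h0.trans h1.symm) Fin.zero_ne_one
  | succ k => exact Nat.lt_succ_of_le (Nat.sInf_le (face_mem_epiDims hε hfib hx))

lemma properlyReduces_of_eq_map {n k : ℕ} {x : X _⦋n + 1⦌}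
    {ε : (⦋n + 1⦌ : SimplexCategory) ⟶ ⦋k⦌} {y : X _⦋k⦌} (hx : x = X.map ε.op y) {a : Fin (n + 1)}
    (h : ε.toOrderHom a.castSucc = ε.toOrderHom a.succ) :
    ProperlyReduces X a x := by
  obtain ⟨θ, rfl⟩ := SimplexCategory.eq_σ_comp_of_not_injective' ε a h
  rw [ProperlyReduces, hx]
  simp only [← Functor.map_comp_apply, ← op_comp, SimplexCategory.δ_comp_σ_self_assoc]

lemma properlyReduces_pred_of_eq_map_of_lt {n k : ℕ} {x : X _⦋n + 1⦌}
    {ε : (⦋n + 1⦌ : SimplexCategory) ⟶ ⦋k⦌} {y : X _⦋k⦌} (hx : x = X.map ε.op y)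
    {i j : Fin (n + 2)} (hji : j < i) (h : ε.toOrderHom j = ε.toOrderHom i) :
    ∃ _ : 0 < (i : ℕ), ProperlyReduces X ⟨(i : ℕ) - 1, by have := i.isLt; omega⟩ x := by
  have hji' : (j : ℕ) < i := hji
  refine ⟨by omega, properlyReduces_of_eq_map hx ?_⟩
  have hsucc : (⟨(i : ℕ) - 1, by omega⟩ : Fin (n + 1)).succ = i := Fin.ext (by simp; omega)
  rw [hsucc]
  exact le_antisymm (ε.toOrderHom.monotone (Fin.le_def.2 (by simp)))
    (h ▸ ε.toOrderHom.monotone (Fin.le_def.2 (by simp; omega)))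

lemma properlyReduces_of_eq_map_of_lt {n k : ℕ} {x : X _⦋n + 1⦌}
    {ε : (⦋n + 1⦌ : SimplexCategory) ⟶ ⦋k⦌} {y : X _⦋k⦌} (hx : x = X.map ε.op y)
    {i j : Fin (n + 2)} (hij : i < j) (h : ε.toOrderHom j = ε.toOrderHom i) :
    ∃ hi : (i : ℕ) < n + 1, ProperlyReduces X ⟨(i : ℕ), hi⟩ x := by
  have hij' : (i : ℕ) < j := hij
  refine ⟨by omega, properlyReduces_of_eq_map hx ?_⟩
  have hcast : (⟨(i : ℕ), by omega⟩ : Fin (n + 1)).castSucc = i := rfl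
  rw [hcast]
  exact le_antisymm (ε.toOrderHom.monotone (Fin.le_def.2 (by simp)))
    (h ▸ ε.toOrderHom.monotone (Fin.le_def.2 (by simp; omega)))

/-- If `i` reduces `x` but does not properly reduce `x`, then `i ≥ 1` and `i - 1`
properly reduces `x`. -/
theorem properlyReduces_pred (X : SSet) (n : ℕ) (x : X _⦋n + 1⦌) (i : Fin (n + 2))
    (hred : Reduces X i x)
    (hnp : ∀ h : (i : ℕ) < n + 1, ¬ ProperlyReduces X ⟨(i : ℕ), h⟩ x) :
    ∃ _ : 0 < (i : ℕ),
      ProperlyReduces X ⟨(i : ℕ) - 1, by have := i.isLt; omega⟩ x := by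
  obtain ⟨ε, hε, y, hx⟩ := sInf_epiDims_mem X x
  by_cases hfib : ∀ j, ε.toOrderHom j = ε.toOrderHom i → j = i
  · have hlt := sInf_epiDims_face_lt hε hfib hx
    have hle := Nat.sInf_le (self_mem_epiDims X x)
    rw [Reduces, dgn_eq, dgn_eq] at hred
    omega
  · push Not at hfib
    obtain ⟨j, hεj, hji⟩ := hfib
    rcases hji.lt_or_gt with hlt | hgt
    · exact properlyReduces_pred_of_eq_map_of_lt hx hlt hεj
    · obtain ⟨hi, hp⟩ := properlyReduces_of_eq_map_of_lt hx hgt hεj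
      exact absurd hp (hnp hi)

end AufhebungSSet
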